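/- Let κ be an uncountable regular cardinal with κ^{<κ}=κ. If A ⊆ 2^κ has the property that for every nowhere dense set F ⊆ 2^κ there exists x ∈ 2^κ with (x + A) ∩ F = ∅, then A is κ-strongly null. -/

import Mathlib

/-!
Fix a family `c : κ → 2^κ` whose range meets every basic clopen set; one exists because there
are only `κ^<κ = κ` restrictions `a ↾ η`. Given `ξ`, the open set `U = ⋃ α [c α ↾ ξ α]`
contains the dense range of `c`, so its complement is nowhere dense. A translate `x + S`
missing that complement lies in `U`, hence `S ⊆ ⋃ α [(x + c α) ↾ ξ α]`.
-/

noncomputable section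

open Cardinal Set

namespace GenSp

/-- The index set: a canonical type of order type `κ.ord`. -/
abbrev I (κ : Cardinal.{0}) : Type := κ.ord.ToType

variable (κ : Cardinal.{0}) (A : Type)

/-- The generalized space `A^κ`. -/
abbrev Sp : Type := I κ → A

/-- The basic clopen set `[x ↾ ξ]`: all functions agreeing with `x` below `ξ`. -/
def cyl (x : Sp κ A) (ξ : I κ) : Set (Sp κ A) := {y | ∀ β < ξ, y β = x β}

/-- The bounded topology on `A^κ`, generated by the basic clopen sets. -/
def bt : TopologicalSpace (Sp κ A) :=
  .generateFrom {S | ∃ x ξ, S = cyl κ A x ξ}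

/-- Open in the bounded topology. -/
def OpenK (s : Set (Sp κ A)) : Prop := @IsOpen _ (bt κ A) s

/-- Closed in the bounded topology. -/
def ClosedK (s : Set (Sp κ A)) : Prop := @IsClosed _ (bt κ A) s

/-- Nowhere dense in the bounded topology. -/
def NwdK (s : Set (Sp κ A)) : Prop := @IsNowhereDense _ (bt κ A) s

/-- κ-meagre: a union of (at most) κ nowhere dense sets. -/
def MeagreK (s : Set (Sp κ A)) : Prop :=
  ∃ f : I κ → Set (Sp κ A), (∀ i, NwdK κ A (f i)) ∧ s = ⋃ i, f i

/-- κ-strongly null set. -/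
def SNullK (S : Set (Sp κ A)) : Prop :=
  ∀ ξ : I κ → I κ, ∃ a : I κ → Sp κ A, S ⊆ ⋃ α, cyl κ A (a α) (ξ α)

/-- Coordinatewise addition over `ℤ₂` (translation by `x`). -/
def xadd (x y : Sp κ Bool) : Sp κ Bool := fun i => xor (x i) (y i)

/-- The covering number of the κ-meagre ideal. -/
def covM : Cardinal :=
  sInf {c | ∃ 𝒜 : Set (Set (Sp κ A)), #𝒜 = c ∧ (∀ s ∈ 𝒜, MeagreK κ A s) ∧ ⋃₀ 𝒜 = Set.univ}

/-- The cofinality of the κ-meagre ideal. -/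
def cofM : Cardinal :=
  sInf {c | ∃ 𝒜 : Set (Set (Sp κ A)), #𝒜 = c ∧ (∀ s ∈ 𝒜, MeagreK κ A s) ∧
    ∀ t, MeagreK κ A t → ∃ s ∈ 𝒜, t ⊆ s}

/-- κ is weakly compact: uncountable and with the partition property κ → (κ)²₂. -/
def IsWeaklyCompact (κ : Cardinal.{0}) : Prop :=
  ℵ₀ < κ ∧ ∀ c : I κ → I κ → Bool, ∃ H : Set (I κ), #H = κ ∧
    ∃ b : Bool, ∀ i ∈ H, ∀ j ∈ H, i < j → c i j = b

/-- `S` is κ-meagre relative to `P` (in the subspace topology). -/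
def MeagreInK (P S : Set (Sp κ A)) : Prop :=
  ∃ f : I κ → Set P,
    (∀ i, @IsNowhereDense _ (TopologicalSpace.induced Subtype.val (bt κ A)) (f i)) ∧
    {x : P | (x : Sp κ A) ∈ S} = ⋃ i, f i

/-- Perfect set in the bounded topology. -/
def PerfK (P : Set (Sp κ A)) : Prop := @Perfect _ (bt κ A) P

/-- Perfectly κ-meagre set. -/
def PMeagreK (S : Set (Sp κ A)) : Prop := ∀ P, PerfK κ A P → MeagreInK κ A P S

/-- κ-λ-set. -/
def KLambdaSet (S : Set (Sp κ A)) : Prop :=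
  ∀ B ⊆ S, #B ≤ κ → ∃ G : I κ → Set (Sp κ A),
    (∀ i, OpenK κ A (G i)) ∧ (⋂ i, G i) ∩ S = B

/-- κ-σ-set. -/
def KSigmaSet (S : Set (Sp κ A)) : Prop :=
  ∀ F : I κ → Set (Sp κ A), (∀ i, ClosedK κ A (F i)) →
    ∃ G : I κ → Set (Sp κ A), (∀ i, OpenK κ A (G i)) ∧
      S ∩ (⋃ i, F i) = S ∩ (⋂ i, G i)

/-- κ-γ-set: every open (proper) κ-cover contains a κ-γ-subcover of size κ. -/
def KGammaSet (X : Set (Sp κ A)) : Prop :=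
  ∀ 𝒰 : Set (Set (Sp κ A)), (∀ U ∈ 𝒰, OpenK κ A U) → X ∉ 𝒰 →
    (∀ C ⊆ X, #C < κ → ∃ U ∈ 𝒰, C ⊆ U) →
    ∃ U : I κ → Set (Sp κ A), (∀ α, U α ∈ 𝒰) ∧
      X ⊆ ⋃ α, ⋂ β, ⋂ (_ : α < β), U β

/-- A (proper) open cover of `X` of size κ, indexed by `I κ`. -/
def IsOCovSeq (X : Set (Sp κ A)) (U : I κ → Set (Sp κ A)) : Prop :=
  (∀ α, OpenK κ A (U α)) ∧ (∀ α, U α ≠ X) ∧ X ⊆ ⋃ α, U α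

/-- A (proper) κ-γ-cover of `X`, indexed by `I κ`. -/
def IsGammaCovSeq (X : Set (Sp κ A)) (U : I κ → Set (Sp κ A)) : Prop :=
  (∀ α, OpenK κ A (U α)) ∧ (∀ α, U α ≠ X) ∧
    X ⊆ ⋃ α, ⋂ β, ⋂ (_ : α < β), U β

/-- The cover `U` is essentially of size κ: no subfamily of size `< κ` covers `X`. -/
def EssK (X : Set (Sp κ A)) (U : I κ → Set (Sp κ A)) : Prop :=
  ∀ s : Set (I κ), #s < κ → ¬ X ⊆ ⋃ β ∈ s, U β

/-- The selection principle `S₁^κ(Γ_κ, Γ_κ)`. -/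
def S1GammaGamma (X : Set (Sp κ A)) : Prop :=
  ∀ 𝒰 : I κ → I κ → Set (Sp κ A), (∀ α, IsGammaCovSeq κ A X (𝒰 α)) →
    ∃ f : I κ → I κ, IsGammaCovSeq κ A X (fun α => 𝒰 α (f α))

/-- The κ-Hurewicz property `U^κ_{<κ}(O_κ, Γ_κ)`. -/
def KHurewicz (X : Set (Sp κ A)) : Prop :=
  ∀ 𝒰 : I κ → I κ → Set (Sp κ A), (∀ α, IsOCovSeq κ A X (𝒰 α)) →
    (∀ α, EssK κ A X (𝒰 α)) →
    ∃ V : I κ → Set (I κ), (∀ α, #(V α) < κ) ∧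
      IsGammaCovSeq κ A X (fun α => ⋃ β ∈ V α, 𝒰 α β)

/-- The κ-Menger property `U^κ_{<κ}(O_κ, O_κ)`. -/
def KMenger (X : Set (Sp κ A)) : Prop :=
  ∀ 𝒰 : I κ → I κ → Set (Sp κ A), (∀ α, IsOCovSeq κ A X (𝒰 α)) →
    (∀ α, EssK κ A X (𝒰 α)) →
    ∃ V : I κ → Set (I κ), (∀ α, #(V α) < κ) ∧
      IsOCovSeq κ A X (fun α => ⋃ β ∈ V α, 𝒰 α β)

/-- The κ-Rothberger property `S₁^κ(O_κ, O_κ)`. -/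
def KRothberger (X : Set (Sp κ A)) : Prop :=
  ∀ 𝒰 : I κ → I κ → Set (Sp κ A), (∀ α, IsOCovSeq κ A X (𝒰 α)) →
    ∃ f : I κ → I κ, IsOCovSeq κ A X (fun α => 𝒰 α (f α))

/-- Closed unbounded subset of `I κ`. -/
def IsClubK (S : Set (I κ)) : Prop :=
  (∀ a : I κ, ∃ b ∈ S, a < b) ∧
  (∀ a : I κ, (∃ b, b < a) → (∀ b < a, ∃ c ∈ S, b < c ∧ c < a) → a ∈ S)

/-- Stationary subset of `I κ`. -/
def IsStatK (S : Set (I κ)) : Prop :=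
  ∀ C : Set (I κ), IsClubK κ C → (S ∩ C).Nonempty

/-- The diamond principle `◇_κ(E)`. -/
def DiamondK (E : Set (I κ)) : Prop :=
  ∃ s : I κ → Set (I κ), (∀ α, s α ⊆ Iio α) ∧
    ∀ X : Set (I κ), IsStatK κ {α | α ∈ E ∧ X ∩ Iio α = s α}

/-- The guessing principle `◇_κ(E, 2^κ, NS_κ)`. -/
def DiamondFunK (E : Set (I κ)) : Prop :=
  ∃ s : I κ → Sp κ Bool,
    ∀ x : Sp κ Bool, IsStatK κ {α | α ∈ E ∧ ∀ β < α, x β = s α β}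

/-- `S` is `X`-small. -/
def XSmall (X : Set (I κ)) (S : Set (Sp κ A)) : Prop :=
  ∃ a : I κ → Sp κ A, S ⊆ ⋃ α ∈ X, cyl κ A (a α) α

/-- `S` is small in `A^κ`. -/
def SmallK (S : Set (Sp κ A)) : Prop :=
  ∃ lam : Cardinal, lam < κ ∧ ∀ α : I κ, ∃ T : Set (Sp κ A),
    #T ≤ lam ∧ S ⊆ ⋃ x ∈ T, cyl κ A x α

section

variable {κ A}

lemma cyl_mono {x : Sp κ A} {ξ ξ' : I κ} (h : ξ ≤ ξ') : cyl κ A x ξ' ⊆ cyl κ A x ξ :=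
  fun _ hy β hβ => hy β (hβ.trans_le h)

lemma mem_cyl_self (x : Sp κ A) (ξ : I κ) : x ∈ cyl κ A x ξ := fun _ _ => rfl

lemma OpenK.exists_cyl_subset [Nonempty (I κ)] {u : Set (Sp κ A)} (hu : OpenK κ A u) :
    ∀ a ∈ u, ∃ ξ, cyl κ A a ξ ⊆ u := by
  induction hu with
  | basic s hs =>
    obtain ⟨x, ξ, rfl⟩ := hs
    exact fun a ha => ⟨ξ, fun y hy β hβ => (hy β hβ).trans (ha β hβ)⟩
  | univ => exact fun _ _ => ⟨Classical.arbitrary _, subset_univ _⟩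
  | inter u v _ _ ihu ihv =>
    intro a ha
    obtain ⟨ξ₁, h₁⟩ := ihu a ha.1
    obtain ⟨ξ₂, h₂⟩ := ihv a ha.2
    exact ⟨max ξ₁ ξ₂, fun y hy =>
      ⟨h₁ (cyl_mono (le_max_left _ _) hy), h₂ (cyl_mono (le_max_right _ _) hy)⟩⟩
  | sUnion S _ ih =>
    rintro a ⟨s, hs, has⟩
    obtain ⟨ξ, hξ⟩ := ih s hs a has
    exact ⟨ξ, fun y hy => ⟨s, hs, hξ hy⟩⟩

lemma OpenK.cyl (x : Sp κ A) (ξ : I κ) : OpenK κ A (cyl κ A x ξ) :=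
  .basic _ ⟨x, ξ, rfl⟩

lemma dense_of_forall_cyl_inter_nonempty [Nonempty (I κ)] {D : Set (Sp κ A)}
    (hD : ∀ a ξ, (cyl κ A a ξ ∩ D).Nonempty) : @Dense _ (bt κ A) D := by
  let _ := bt κ A
  refine dense_iff_inter_open.2 fun u hu ⟨a, ha⟩ => ?_
  obtain ⟨ξ, hξ⟩ := OpenK.exists_cyl_subset hu a ha
  exact (hD a ξ).mono (inter_subset_inter_left _ hξ)

lemma nwdK_compl_of_forall_cyl_inter_nonempty [Nonempty (I κ)] {u : Set (Sp κ A)}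
    (hu : OpenK κ A u) (hdense : ∀ a ξ, (cyl κ A a ξ ∩ u).Nonempty) : NwdK κ A uᶜ := by
  let _ := bt κ A
  refine (isClosed_isNowhereDense_iff_compl.2 ?_).2
  rw [compl_compl]
  exact ⟨hu, dense_of_forall_cyl_inter_nonempty hdense⟩

lemma mk_sigma_Iio_arrow_le (hκ : ℵ₀ ≤ κ) (hA : #A ≤ κ) (hpow : κ ^< κ = κ) :
    #(Σ ζ : I κ, Iio ζ → A) ≤ κ := by
  have hbound (ζ : I κ) : #(Iio ζ → A) ≤ κ :=
    calc #(Iio ζ → A) = #A ^ #(Iio ζ) := (power_def _ _).symm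
      _ ≤ κ ^ #(Iio ζ) := power_le_power_right hA
      _ ≤ κ ^< κ := le_powerlt κ (by simpa using mk_Iio_lt ζ (by simp))
      _ = κ := hpow
  calc #(Σ ζ : I κ, Iio ζ → A) = sum fun ζ : I κ => #(Iio ζ → A) := mk_sigma _
    _ ≤ sum fun _ : I κ => κ := sum_le_sum _ _ hbound
    _ = κ := by rw [sum_const', mk_ord_toType, mul_eq_self hκ]

lemma exists_seq_forall_cyl_inter_nonempty [Nonempty A] [Nonempty (I κ)] (hκ : ℵ₀ ≤ κ)
    (hA : #A ≤ κ) (hpow : κ ^< κ = κ) :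
    ∃ c : I κ → Sp κ A, ∀ a ξ, (cyl κ A a ξ ∩ range c).Nonempty := by
  let extend (s : Σ ζ : I κ, Iio ζ → A) : Sp κ A := fun β =>
    if h : β < s.1 then s.2 ⟨β, h⟩ else Classical.arbitrary A
  obtain ⟨e⟩ : Nonempty ((Σ ζ : I κ, Iio ζ → A) ↪ I κ) :=
    (mk_sigma_Iio_arrow_le hκ hA hpow).trans_eq (mk_ord_toType κ).symm
  have : Nonempty (Σ ζ : I κ, Iio ζ → A) :=
    ⟨⟨Classical.arbitrary _, fun _ => Classical.arbitrary A⟩⟩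
  refine ⟨extend ∘ Function.invFun e, fun a ξ => ?_⟩
  obtain ⟨α, hα⟩ := Function.invFun_surjective e.injective ⟨ξ, fun β => a β⟩
  refine ⟨_, fun β hβ => ?_, α, rfl⟩
  change extend (Function.invFun e α) β = a β
  simp [extend, hα, hβ]

lemma xadd_mem_cyl_iff {x y c : Sp κ Bool} {ξ : I κ} :
    xadd κ x y ∈ cyl κ Bool c ξ ↔ y ∈ cyl κ Bool (xadd κ x c) ξ := by
  refine forall₂_congr fun β _ => ?_
  simp only [xadd]
  cases x β <;> simp

end

theorem stmt5_general (κ : Cardinal.{0}) (hk : Cardinal.aleph0 < κ) (hpow : κ ^< κ = κ)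
    (S : Set (Sp κ Bool))
    (h : ∀ F, NwdK κ Bool F → ∃ x, (xadd κ x '' S) ∩ F = ∅) :
    SNullK κ Bool S := by
  have : Nonempty (I κ) := Ordinal.nonempty_toType_iff.2 <| by
    simpa using (aleph0_pos.trans hk).ne'
  have hBool : #Bool ≤ κ := by simpa using (ofNat_lt_aleph0 (n := 2)).le.trans hk.le
  obtain ⟨c, hc⟩ := exists_seq_forall_cyl_inter_nonempty hk.le hBool hpow
  intro ξ
  set U := ⋃ α, cyl κ Bool (c α) (ξ α)
  have hUopen : OpenK κ Bool U := @isOpen_iUnion _ _ (bt κ Bool) _ fun α => OpenK.cyl _ _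
  have hcU : range c ⊆ U := range_subset_iff.2 fun α => mem_iUnion_of_mem α (mem_cyl_self _ _)
  obtain ⟨x, hx⟩ := h Uᶜ <| nwdK_compl_of_forall_cyl_inter_nonempty hUopen
    fun a η => (hc a η).mono (inter_subset_inter_right _ hcU)
  refine ⟨fun α => xadd κ x (c α), fun s hs => ?_⟩
  have hxs : xadd κ x s ∈ U := by
    by_contra hxs
    exact (eq_empty_iff_forall_notMem.1 hx _) ⟨mem_image_of_mem _ hs, hxs⟩
  obtain ⟨α, hα⟩ := mem_iUnion.1 hxs
  exact mem_iUnion.2 ⟨α, xadd_mem_cyl_iff.1 hα⟩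

theorem stmt5 (κ : Cardinal.{0}) (hk : Cardinal.aleph0 < κ) (hreg : κ.IsRegular) (hpow : κ ^< κ = κ)
    (S : Set (Sp κ Bool))
    (h : ∀ F, NwdK κ Bool F → ∃ x, (xadd κ x '' S) ∩ F = ∅) :
    SNullK κ Bool S :=
  stmt5_general κ hk hpow S h

end GenSp
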